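/- Let a : [0,1] → ℝ be weakly or strongly degenerate at 0 with constant K, and let y'''' : (0,1] → ℝ be measurable with ∫₀¹ a(s) y''''(s)² ds < ∞. Then for every δ ∈ (0,1), δ ∫_δ¹ |y''''(s)| ds ≤ δ^{1−K/2} (1−δ)^{1/2} a(1)^{−1/2} (∫₀¹ a(s)y''''(s)² ds)^{1/2}; in particular, since K < 2, lim_{δ→0⁺} δ ∫_δ¹ y''''(s) ds = 0. -/

import Mathlib

open MeasureTheory Set Filter Topology

noncomputable section

/-- The set of quotients `x |a'(x)| / a(x)` for `x ∈ (0,1]`, whose supremum is the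
degeneracy constant `K`. -/
def DegenSet (a a' : ℝ → ℝ) : Set ℝ :=
  {r : ℝ | ∃ x ∈ Set.Ioc (0:ℝ) 1, r = x * |a' x| / a x}

/-- `a` is weakly degenerate at `0` with constant `K`: `a ∈ C[0,1] ∩ C¹(0,1]`, `a(0) = 0`,
`a > 0` on `(0,1]`, and `K = sup_{x ∈ (0,1]} x|a'(x)|/a(x) ∈ (0,1)`. -/
def WeaklyDegenerate (a a' : ℝ → ℝ) (K : ℝ) : Prop :=
  ContinuousOn a (Set.Icc 0 1) ∧
  (∀ x ∈ Set.Ioc (0:ℝ) 1, HasDerivWithinAt a (a' x) (Set.Icc 0 1) x) ∧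
  ContinuousOn a' (Set.Ioc 0 1) ∧
  a 0 = 0 ∧ (∀ x ∈ Set.Ioc (0:ℝ) 1, 0 < a x) ∧
  K = sSup (DegenSet a a') ∧ 0 < K ∧ K < 1

/-- `a` is strongly degenerate at `0` with constant `K`: `a ∈ C¹[0,1]`, `a(0) = 0`,
`a > 0` on `(0,1]`, and `K = sup_{x ∈ (0,1]} x|a'(x)|/a(x) ∈ [1,2)`. -/
def StronglyDegenerate (a a' : ℝ → ℝ) (K : ℝ) : Prop :=
  (∀ x ∈ Set.Icc (0:ℝ) 1, HasDerivWithinAt a (a' x) (Set.Icc 0 1) x) ∧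
  ContinuousOn a' (Set.Icc 0 1) ∧
  a 0 = 0 ∧ (∀ x ∈ Set.Ioc (0:ℝ) 1, 0 < a x) ∧
  K = sSup (DegenSet a a') ∧ 1 ≤ K ∧ K < 2

/-- `a` is weakly or strongly degenerate at `0` with constant `K`. -/
def Degenerate (a a' : ℝ → ℝ) (K : ℝ) : Prop :=
  WeaklyDegenerate a a' K ∨ StronglyDegenerate a a' K

lemma my_cauchy_schwarz {μ : Measure ℝ} (f g : ℝ → ℝ)
    (hf : Integrable (fun x => f x ^ 2) μ) (hg : Integrable (fun x => g x ^ 2) μ)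
    (hfg : Integrable (fun x => f x * g x) μ) :
    (∫ x, f x * g x ∂μ) ^ 2 ≤ (∫ x, f x ^ 2 ∂μ) * ∫ x, g x ^ 2 ∂μ := by
  set A := ∫ x, f x ^ 2 ∂μ
  set B := ∫ x, f x * g x ∂μ
  set C := ∫ x, g x ^ 2 ∂μ
  have hq : ∀ t : ℝ, 0 ≤ A * (t * t) + (2 * B) * t + C := by
    intro t
    have h0 : 0 ≤ ∫ x, (t * f x + g x) ^ 2 ∂μ := integral_nonneg fun x => sq_nonneg _
    have hexp : (fun x => (t * f x + g x) ^ 2)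
        = fun x => t ^ 2 * f x ^ 2 + (2 * t) * (f x * g x) + g x ^ 2 := by
      funext x; ring
    rw [hexp] at h0
    have h1 : ∫ x, (t ^ 2 * f x ^ 2 + (2 * t) * (f x * g x) + g x ^ 2) ∂μ
        = (∫ x, (t ^ 2 * f x ^ 2 + (2 * t) * (f x * g x)) ∂μ) + C :=
      integral_add ((hf.const_mul _).add (hfg.const_mul _)) hg
    have h2 : ∫ x, (t ^ 2 * f x ^ 2 + (2 * t) * (f x * g x)) ∂μ
        = (∫ x, t ^ 2 * f x ^ 2 ∂μ) + ∫ x, (2 * t) * (f x * g x) ∂μ :=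
      integral_add (hf.const_mul _) (hfg.const_mul _)
    rw [h1, h2, MeasureTheory.integral_const_mul, MeasureTheory.integral_const_mul] at h0
    nlinarith [h0]
  have hd := discrim_le_zero hq
  rw [discrim] at hd
  nlinarith [hd]

lemma sq_rpow_aux {x : ℝ} (hx : 0 ≤ x) (p : ℝ) : (x ^ p) ^ 2 = x ^ (p * 2) := by
  rw [← Real.rpow_natCast (x ^ p) 2, ← Real.rpow_mul hx]
  norm_num

set_option maxHeartbeats 1000000 in
/-- If `a` is weakly or strongly degenerate at `0` with constant `K` and
`∫₀¹ a (y'''')² < ∞`, then for every `δ ∈ (0,1)`,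
`δ ∫_δ¹ |y''''| ≤ δ^{1-K/2} (1-δ)^{1/2} a(1)^{-1/2} (∫₀¹ a (y'''')²)^{1/2}`;
in particular, since `K < 2`, `lim_{δ→0⁺} δ ∫_δ¹ y'''' = 0`. -/
theorem delta_integral_estimate (a a' : ℝ → ℝ) (K : ℝ) (h : Degenerate a a' K)
    (y'''' : ℝ → ℝ)
    (hm : AEMeasurable y'''' (MeasureTheory.volume.restrict (Set.Ioc (0:ℝ) 1)))
    (hDA : MeasureTheory.IntegrableOn (fun s => a s * y'''' s ^ 2) (Set.Ioc 0 1)) :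
    (∀ δ ∈ Set.Ioo (0:ℝ) 1,
      δ * ∫ s in Set.Ioc δ 1, |y'''' s| ≤
        δ ^ (1 - K / 2) * (1 - δ) ^ ((1:ℝ) / 2) * (a 1) ^ (-(1:ℝ) / 2) *
          (∫ s in Set.Ioc (0:ℝ) 1, a s * y'''' s ^ 2) ^ ((1:ℝ) / 2)) ∧
    Filter.Tendsto (fun δ => δ * ∫ s in Set.Ioc δ 1, y'''' s)
      (nhdsWithin 0 (Set.Ioi 0)) (nhds 0) := by
  -- unpack hypotheses
  obtain ⟨ha_cont, hderiv, hpos, hK0, hK2, hKs⟩ :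
      ContinuousOn a (Set.Icc 0 1) ∧
      (∀ x ∈ Set.Ioc (0:ℝ) 1, HasDerivWithinAt a (a' x) (Set.Icc 0 1) x) ∧
      (∀ x ∈ Set.Ioc (0:ℝ) 1, 0 < a x) ∧ 0 < K ∧ K < 2 ∧ K = sSup (DegenSet a a') := by
    rcases h with ⟨h1, h2, h3, h4, h5, h6, h7, h8⟩ | ⟨h1, h2, h3, h4, h5, h6, h7⟩
    · exact ⟨h1, h2, h5, h7, by linarith, h6⟩
    · exact ⟨fun x hx => (h1 x hx).continuousWithinAt,
        fun x hx => h1 x (Set.Ioc_subset_Icc_self hx), h4, by linarith, h7, h5⟩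
  have ha1 : 0 < a 1 := hpos 1 ⟨one_pos, le_rfl⟩
  have hbdd : BddAbove (DegenSet a a') := by
    by_contra hb
    rw [Real.sSup_of_not_bddAbove hb] at hKs
    linarith
  have hquot : ∀ x ∈ Set.Ioc (0:ℝ) 1, x * |a' x| ≤ K * a x := by
    intro x hx
    have hax := hpos x hx
    have h1 : x * |a' x| / a x ≤ K := hKs ▸ le_csSup hbdd ⟨x, hx, rfl⟩
    have h2 := mul_le_mul_of_nonneg_right h1 hax.le
    rwa [div_mul_cancel₀ _ hax.ne'] at h2
  -- key monotonicity : a 1 * s ^ K ≤ a s on (0, 1]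
  have key : ∀ s ∈ Set.Ioc (0:ℝ) 1, a 1 * s ^ K ≤ a s := by
    intro s hs
    obtain ⟨hs0, hs1⟩ := hs
    have anti : AntitoneOn (fun x => a x * x ^ (-K)) (Set.Icc s 1) := by
      have hdiff : ∀ x ∈ interior (Set.Icc s 1),
          HasDerivAt (fun x => a x * x ^ (-K))
            (a' x * x ^ (-K) + a x * (-K * x ^ (-K - 1))) x := by
        intro x hx
        rw [interior_Icc] at hx
        obtain ⟨hx1, hx2⟩ := hx
        have hx0 : 0 < x := lt_trans hs0 hx1
        have hxI : x ∈ Set.Ioc (0:ℝ) 1 := ⟨hx0, hx2.le⟩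
        have hda : HasDerivAt a (a' x) x :=
          (hderiv x hxI).hasDerivAt (Icc_mem_nhds hx0 hx2)
        have hdr : HasDerivAt (fun x : ℝ => x ^ (-K)) (-K * x ^ (-K - 1)) x :=
          Real.hasDerivAt_rpow_const (Or.inl hx0.ne')
        exact hda.mul hdr
      apply antitoneOn_of_deriv_nonpos (convex_Icc s 1)
      · apply ContinuousOn.mul (ha_cont.mono ?_)
        · intro x hx
          exact (Real.continuousAt_rpow_const x (-K)
            (Or.inl (ne_of_gt (lt_of_lt_of_le hs0 hx.1)))).continuousWithinAt
        · intro x hx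
          exact ⟨le_trans hs0.le hx.1, hx.2⟩
      · intro x hx
        exact (hdiff x hx).differentiableAt.differentiableWithinAt
      · intro x hx
        rw [(hdiff x hx).deriv]
        rw [interior_Icc] at hx
        obtain ⟨hx1, hx2⟩ := hx
        have hx0 : 0 < x := lt_trans hs0 hx1
        have hxI : x ∈ Set.Ioc (0:ℝ) 1 := ⟨hx0, hx2.le⟩
        have hq := hquot x hxI
        have hx' : x * a' x ≤ K * a x :=
          le_trans (mul_le_mul_of_nonneg_left (le_abs_self _) hx0.le) hq
        have hp : (0:ℝ) < x ^ (-K - 1) := Real.rpow_pos_of_pos hx0 _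
        have h1 : x ^ (-K) = x * x ^ (-K - 1) := by
          have hh := (Real.rpow_add hx0 1 (-K - 1)).symm
          rw [Real.rpow_one] at hh
          rw [hh]; congr 1; ring
        rw [h1]
        have hfin : (x * a' x - K * a x) * x ^ (-K - 1) ≤ 0 :=
          mul_nonpos_of_nonpos_of_nonneg (by linarith) hp.le
        nlinarith [hfin]
    have h2 : a 1 * (1:ℝ) ^ (-K) ≤ a s * s ^ (-K) :=
      anti ⟨le_rfl, hs1⟩ ⟨hs1, le_rfl⟩ hs1
    rw [Real.one_rpow, mul_one] at h2
    have hsK : (0:ℝ) < s ^ K := Real.rpow_pos_of_pos hs0 _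
    have hcancel : s ^ (-K) * s ^ K = 1 := by
      rw [← Real.rpow_add hs0]; simp
    calc a 1 * s ^ K ≤ (a s * s ^ (-K)) * s ^ K := mul_le_mul_of_nonneg_right h2 hsK.le
      _ = a s * (s ^ (-K) * s ^ K) := by ring
      _ = a s := by rw [hcancel, mul_one]
  set I := ∫ s in Set.Ioc (0:ℝ) 1, a s * y'''' s ^ 2 with hI_def
  have hI0 : 0 ≤ I :=
    setIntegral_nonneg measurableSet_Ioc fun s hs => mul_nonneg (hpos s hs).le (sq_nonneg _)
  -- main estimate
  have hmain : ∀ δ ∈ Set.Ioo (0:ℝ) 1,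
      δ * ∫ s in Set.Ioc δ 1, |y'''' s| ≤
        δ ^ (1 - K / 2) * (1 - δ) ^ ((1:ℝ) / 2) * (a 1) ^ (-(1:ℝ) / 2) *
          I ^ ((1:ℝ) / 2) := by
    intro δ hδ
    obtain ⟨hδ0, hδ1⟩ := hδ
    set c := a 1 * δ ^ K with hc_def
    have hδK : (0:ℝ) < δ ^ K := Real.rpow_pos_of_pos hδ0 _
    have hc : 0 < c := mul_pos ha1 hδK
    have hsub : Set.Ioc δ 1 ⊆ Set.Ioc (0:ℝ) 1 := Set.Ioc_subset_Ioc_left hδ0.le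
    have hlow : ∀ s ∈ Set.Ioc δ 1, c ≤ a s := by
      intro s hs
      have hsI : s ∈ Set.Ioc (0:ℝ) 1 := hsub hs
      calc c ≤ a 1 * s ^ K :=
          mul_le_mul_of_nonneg_left (Real.rpow_le_rpow hδ0.le hs.1.le hK0.le) ha1.le
        _ ≤ a s := key s hsI
    -- measurability
    have hmy : AEMeasurable y'''' (volume.restrict (Set.Ioc δ 1)) :=
      hm.mono_measure (Measure.restrict_mono hsub le_rfl)
    have haf : IntegrableOn (fun s => a s * y'''' s ^ 2) (Set.Ioc δ 1) := hDA.mono_set hsub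
    have ham : AEMeasurable a (volume.restrict (Set.Ioc δ 1)) :=
      ((ha_cont.mono (hsub.trans Set.Ioc_subset_Icc_self)).aemeasurable measurableSet_Ioc)
    -- integrability of |y''''| on (δ, 1]
    have hvol : volume (Set.Ioc δ (1:ℝ)) < ⊤ := by
      rw [Real.volume_Ioc]; exact ENNReal.ofReal_lt_top
    have hyabs : IntegrableOn (fun s => |y'''' s|) (Set.Ioc δ 1) := by
      have hb : IntegrableOn (fun s => (1 + a s * y'''' s ^ 2 * c⁻¹) / 2) (Set.Ioc δ 1) :=
        ((integrableOn_const (C := (1:ℝ)) hvol.ne).add (haf.mul_const _)).div_const 2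
      have hms : AEStronglyMeasurable (fun s => |y'''' s|) (volume.restrict (Set.Ioc δ 1)) :=
        hmy.aestronglyMeasurable.norm.congr
          (Filter.Eventually.of_forall fun s => Real.norm_eq_abs (y'''' s))
      refine hb.mono' hms ?_
      rw [ae_restrict_iff' measurableSet_Ioc]
      filter_upwards with s hs
      have ht : y'''' s ^ 2 ≤ a s * y'''' s ^ 2 * c⁻¹ := by
        have h1 : c * y'''' s ^ 2 ≤ a s * y'''' s ^ 2 :=
          mul_le_mul_of_nonneg_right (hlow s hs) (sq_nonneg _)
        calc y'''' s ^ 2 = c * y'''' s ^ 2 * c⁻¹ := by field_simp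
          _ ≤ a s * y'''' s ^ 2 * c⁻¹ := mul_le_mul_of_nonneg_right h1 (inv_nonneg.mpr hc.le)
      have habs : ‖|y'''' s|‖ = |y'''' s| := by
        rw [Real.norm_eq_abs, abs_abs]
      rw [habs]
      nlinarith [sq_nonneg (|y'''' s| - 1), sq_abs (y'''' s), ht]
    -- Cauchy-Schwarz setup
    set f : ℝ → ℝ := fun s => Real.sqrt (a s) * |y'''' s| with hf_def
    set g : ℝ → ℝ := fun s => (Real.sqrt (a s))⁻¹ with hg_def
    have hfg_eq : ∀ s ∈ Set.Ioc δ 1, f s * g s = |y'''' s| := by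
      intro s hs
      have : Real.sqrt (a s) ≠ 0 := by
        rw [Real.sqrt_ne_zero']; exact hpos s (hsub hs)
      show Real.sqrt (a s) * |y'''' s| * (Real.sqrt (a s))⁻¹ = |y'''' s|
      rw [mul_comm (Real.sqrt (a s)), mul_assoc, mul_inv_cancel₀ this, mul_one]
    have hf2_eq : ∀ s ∈ Set.Ioc δ 1, f s ^ 2 = a s * y'''' s ^ 2 := by
      intro s hs
      simp only [hf_def]
      rw [mul_pow, Real.sq_sqrt (hpos s (hsub hs)).le, sq_abs]
    have hg2_eq : ∀ s ∈ Set.Ioc δ 1, g s ^ 2 = (a s)⁻¹ := by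
      intro s hs
      simp only [hg_def]
      rw [inv_pow, Real.sq_sqrt (hpos s (hsub hs)).le]
    have hf2 : Integrable (fun s => f s ^ 2) (volume.restrict (Set.Ioc δ 1)) :=
      haf.congr ((ae_restrict_iff' measurableSet_Ioc).mpr
        (Filter.Eventually.of_forall fun s hs => (hf2_eq s hs).symm))
    have hg2 : Integrable (fun s => g s ^ 2) (volume.restrict (Set.Ioc δ 1)) := by
      apply Integrable.mono' (integrable_const c⁻¹)
      · have h1 : AEMeasurable (fun s => Real.sqrt (a s)) (volume.restrict (Set.Ioc δ 1)) :=
          Real.continuous_sqrt.measurable.comp_aemeasurable ham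
        exact (h1.inv.pow_const 2).aestronglyMeasurable
      · rw [ae_restrict_iff' measurableSet_Ioc]
        filter_upwards with s hs
        rw [hg2_eq s hs, Real.norm_eq_abs,
          abs_of_nonneg (inv_nonneg.mpr (hpos s (hsub hs)).le)]
        exact inv_anti₀ hc (hlow s hs)
    have hfg : Integrable (fun s => f s * g s) (volume.restrict (Set.Ioc δ 1)) :=
      hyabs.congr ((ae_restrict_iff' measurableSet_Ioc).mpr
        (Filter.Eventually.of_forall fun s hs => (hfg_eq s hs).symm))
    have hCS := my_cauchy_schwarz f g hf2 hg2 hfg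
    set L := ∫ s in Set.Ioc δ 1, |y'''' s| with hL_def
    have hL0 : 0 ≤ L := setIntegral_nonneg measurableSet_Ioc fun s _ => abs_nonneg _
    have hLfg : (∫ s in Set.Ioc δ 1, f s * g s) = L :=
      setIntegral_congr_fun measurableSet_Ioc fun s hs => hfg_eq s hs
    have hAeq : (∫ s in Set.Ioc δ 1, f s ^ 2) = ∫ s in Set.Ioc δ 1, a s * y'''' s ^ 2 :=
      setIntegral_congr_fun measurableSet_Ioc fun s hs => hf2_eq s hs
    have hA_le : (∫ s in Set.Ioc δ 1, a s * y'''' s ^ 2) ≤ I := by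
      apply setIntegral_mono_set hDA
      · have hnn : ∀ᵐ s ∂(volume.restrict (Set.Ioc (0:ℝ) 1)), 0 ≤ a s * y'''' s ^ 2 :=
          (ae_restrict_iff' measurableSet_Ioc).mpr
            (Filter.Eventually.of_forall fun s hs => mul_nonneg (hpos s hs).le (sq_nonneg _))
        exact hnn
      · exact HasSubset.Subset.eventuallyLE hsub
    have hB_le : (∫ s in Set.Ioc δ 1, g s ^ 2) ≤ c⁻¹ * (1 - δ) := by
      have hb := norm_setIntegral_le_of_norm_le_const (C := c⁻¹) (s := Set.Ioc δ 1)
        (by rw [Real.volume_Ioc]; exact ENNReal.ofReal_lt_top) (f := fun s => g s ^ 2)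
        (fun s hs => by
          show ‖g s ^ 2‖ ≤ c⁻¹
          rw [hg2_eq s hs, Real.norm_eq_abs,
            abs_of_nonneg (inv_nonneg.mpr (hpos s (hsub hs)).le)]
          exact inv_anti₀ hc (hlow s hs))
      rw [Real.volume_real_Ioc_of_le (by linarith)] at hb
      exact le_trans (le_abs_self _) hb
    have hA0 : 0 ≤ ∫ s in Set.Ioc δ 1, f s ^ 2 :=
      setIntegral_nonneg measurableSet_Ioc fun s _ => sq_nonneg _
    have hL2 : L ^ 2 ≤ I * (c⁻¹ * (1 - δ)) := by
      rw [← hLfg]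
      refine le_trans hCS ?_
      have hB0 : 0 ≤ ∫ s in Set.Ioc δ 1, g s ^ 2 :=
        setIntegral_nonneg measurableSet_Ioc fun s _ => sq_nonneg _
      have := mul_le_mul (hAeq ▸ hA_le) hB_le hB0 hI0
      exact this
    -- final rpow computation
    set R := δ ^ (1 - K / 2) * (1 - δ) ^ ((1:ℝ) / 2) * (a 1) ^ (-(1:ℝ) / 2) * I ^ ((1:ℝ) / 2)
      with hR_def
    have hR0 : 0 ≤ R := by
      apply mul_nonneg (mul_nonneg (mul_nonneg ?_ ?_) ?_) ?_ <;>
        exact Real.rpow_nonneg (by linarith) _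
    have hRsq : R ^ 2 = δ ^ ((2:ℝ) - K) * (1 - δ) * (a 1)⁻¹ * I := by
      rw [hR_def]
      have e1 : (δ ^ (1 - K / 2)) ^ 2 = δ ^ ((2:ℝ) - K) := by
        rw [sq_rpow_aux hδ0.le]; ring_nf
      have e2 : ((1 - δ) ^ ((1:ℝ) / 2)) ^ 2 = 1 - δ := by
        rw [sq_rpow_aux (by linarith : (0:ℝ) ≤ 1 - δ)]; norm_num
      have e3 : ((a 1) ^ (-(1:ℝ) / 2)) ^ 2 = (a 1)⁻¹ := by
        rw [sq_rpow_aux ha1.le]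
        norm_num [Real.rpow_neg_one]
      have e4 : (I ^ ((1:ℝ) / 2)) ^ 2 = I := by
        rw [sq_rpow_aux hI0]; norm_num
      calc (δ ^ (1 - K / 2) * (1 - δ) ^ ((1:ℝ) / 2) * (a 1) ^ (-(1:ℝ) / 2) * I ^ ((1:ℝ) / 2)) ^ 2
          = (δ ^ (1 - K / 2)) ^ 2 * ((1 - δ) ^ ((1:ℝ) / 2)) ^ 2 * ((a 1) ^ (-(1:ℝ) / 2)) ^ 2
            * (I ^ ((1:ℝ) / 2)) ^ 2 := by ring
        _ = δ ^ ((2:ℝ) - K) * (1 - δ) * (a 1)⁻¹ * I := by rw [e1, e2, e3, e4]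
    have hδ2K : δ ^ ((2:ℝ) - K) = δ ^ 2 * (δ ^ K)⁻¹ := by
      rw [show (2:ℝ) - K = 2 + (-K) by ring, Real.rpow_add hδ0, Real.rpow_neg hδ0.le,
        Real.rpow_two]
    have hfinal : (δ * L) ^ 2 ≤ R ^ 2 := by
      rw [hRsq, hδ2K]
      calc (δ * L) ^ 2 = δ ^ 2 * L ^ 2 := by ring
        _ ≤ δ ^ 2 * (I * (c⁻¹ * (1 - δ))) := by
            exact mul_le_mul_of_nonneg_left hL2 (sq_nonneg δ)
        _ = δ ^ 2 * (δ ^ K)⁻¹ * (1 - δ) * ((a 1)⁻¹ * I) := by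
            rw [hc_def, mul_inv]; ring
        _ = δ ^ 2 * (δ ^ K)⁻¹ * (1 - δ) * (a 1)⁻¹ * I := by ring
    calc δ * L = Real.sqrt ((δ * L) ^ 2) := (Real.sqrt_sq (by positivity)).symm
      _ ≤ Real.sqrt (R ^ 2) := Real.sqrt_le_sqrt hfinal
      _ = R := Real.sqrt_sq hR0
  refine ⟨hmain, ?_⟩
  -- limit part
  have hp : 0 < 1 - K / 2 := by linarith
  set C := (a 1) ^ (-(1:ℝ) / 2) * I ^ ((1:ℝ) / 2) with hC_def
  have hC0 : 0 ≤ C := mul_nonneg (Real.rpow_nonneg ha1.le _) (Real.rpow_nonneg hI0 _)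
  have hev : ∀ᶠ δ in nhdsWithin (0:ℝ) (Set.Ioi 0),
      ‖δ * ∫ s in Set.Ioc δ 1, y'''' s‖ ≤ δ ^ (1 - K / 2) * C := by
    filter_upwards [Ioo_mem_nhdsGT_of_mem (Set.left_mem_Ico.mpr one_pos)] with δ hδ
    obtain ⟨hδ0, hδ1⟩ := hδ
    have h1 : ‖δ * ∫ s in Set.Ioc δ 1, y'''' s‖ ≤ δ * ∫ s in Set.Ioc δ 1, |y'''' s| := by
      rw [Real.norm_eq_abs, abs_mul, abs_of_pos hδ0]
      refine mul_le_mul_of_nonneg_left ?_ hδ0.le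
      calc |∫ s in Set.Ioc δ 1, y'''' s| = ‖∫ s in Set.Ioc δ 1, y'''' s‖ :=
          (Real.norm_eq_abs _).symm
        _ ≤ ∫ s in Set.Ioc δ 1, ‖y'''' s‖ := norm_integral_le_integral_norm _
        _ = ∫ s in Set.Ioc δ 1, |y'''' s| := by
            simp only [Real.norm_eq_abs]
    refine le_trans h1 (le_trans (hmain δ ⟨hδ0, hδ1⟩) ?_)
    have h2 : (1 - δ) ^ ((1:ℝ) / 2) ≤ 1 :=
      Real.rpow_le_one (by linarith) (by linarith) (by norm_num)
    have h3 : 0 ≤ δ ^ (1 - K / 2) := Real.rpow_nonneg hδ0.le _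
    calc δ ^ (1 - K / 2) * (1 - δ) ^ ((1:ℝ) / 2) * (a 1) ^ (-(1:ℝ) / 2) * I ^ ((1:ℝ) / 2)
        = δ ^ (1 - K / 2) * (1 - δ) ^ ((1:ℝ) / 2) * C := by rw [hC_def]; ring
      _ ≤ δ ^ (1 - K / 2) * 1 * C := by
          refine mul_le_mul_of_nonneg_right (mul_le_mul_of_nonneg_left h2 h3) hC0
      _ = δ ^ (1 - K / 2) * C := by ring
  have hten : Filter.Tendsto (fun δ : ℝ => δ ^ (1 - K / 2) * C)
      (nhdsWithin 0 (Set.Ioi 0)) (nhds 0) := by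
    have h4 : Filter.Tendsto (fun δ : ℝ => δ ^ (1 - K / 2)) (nhds 0) (nhds 0) := by
      have := (Real.continuousAt_rpow_const 0 (1 - K / 2) (Or.inr hp.le)).tendsto
      simpa [Real.zero_rpow hp.ne'] using this
    have h5 := (h4.mono_left (nhdsWithin_le_nhds
      (s := Set.Ioi (0:ℝ)))).mul_const C
    simpa using h5
  exact squeeze_zero_norm' hev hten
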